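/- arXiv:1506.01374 — 2 statements merged into one kernel-verified Lean document; each statement's English description precedes it below -/
import Mathlib

section
/- Let D, E, F : ℤ₂³ → ℤ₂ be the quadratic forms D(x₀,x₁,x₂) = D₁x₀² + D₂x₀x₁ + D₃x₀x₂ + D₄x₁² + D₅x₁x₂ + D₆x₂², E(x₀,x₁,x₂) = E₁x₀² + E₂x₀x₁ + E₃x₀x₂ + E₄x₁² + E₅x₁x₂ + E₆x₂², F(x₀,x₁,x₂) = F₁x₀² + F₂x₀x₁ + F₃x₀x₂ + F₄x₁² + F₅x₁x₂ + F₆x₂² with coefficients in ℤ₂. Assume D₄, E₄, F₆ are units of ℤ₂ and all of the coefficients D₁,D₂,D₃,D₅,D₆, E₁,E₂,E₃,E₅,E₆, F₁,F₂,F₃,F₄,F₅ lie in 2ℤ₂. Then for every (x₀,x₁,x₂) ∈ ℤ₂³ with x₁ a unit of ℤ₂, the values D(x₀,x₁,x₂) and E(x₀,x₁,x₂)² − 4·D(x₀,x₁,x₂)·F(x₀,x₁,x₂) are units of ℤ₂, and E(x₀,x₁,x₂)² − 4·D(x₀,x₁,x₂)·F(x₀,x₁,x₂) ≡ 1 (mod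 4ℤ₂). -/
/-- A ternary quadratic form with the given six coefficients, evaluated at `(x0, x1, x2)`. -/
noncomputable def quadForm (c1 c2 c3 c4 c5 c6 x0 x1 x2 : ℤ_[2]) : ℤ_[2] :=
  c1 * x0 ^ 2 + c2 * x0 * x1 + c3 * x0 * x2 + c4 * x1 ^ 2 + c5 * x1 * x2 + c6 * x2 ^ 2

lemma isUnit_iff_not_two_dvd (z : ℤ_[2]) : IsUnit z ↔ ¬ (2 : ℤ_[2]) ∣ z := by
  have h2 : ((2 : ℕ) : ℤ_[2]) = (2 : ℤ_[2]) := by norm_cast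
  rw [PadicInt.isUnit_iff]
  constructor
  · intro h hdvd
    rw [← h2, ← PadicInt.norm_lt_one_iff_dvd] at hdvd
    simp [h] at hdvd
  · intro h
    rw [← h2, ← PadicInt.norm_lt_one_iff_dvd] at h
    have := PadicInt.norm_le_one z
    push_neg at h
    linarith

lemma two_dvd_or (z : ℤ_[2]) : (2 : ℤ_[2]) ∣ z ∨ (2 : ℤ_[2]) ∣ (z - 1) := by
  have h := PadicInt.appr_spec 1 z
  rw [Ideal.mem_span_singleton] at h
  have hlt : z.appr 1 < 2 ^ 1 := PadicInt.appr_lt z 1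
  have h2 : ((2:ℕ)^1 : ℤ_[2]) = (2 : ℤ_[2]) := by push_cast; ring
  rw [h2] at h
  interval_cases hv : z.appr 1
  · left
    simpa using h
  · right
    simpa using h

lemma unit_sub_one (z : ℤ_[2]) (h : IsUnit z) : (2 : ℤ_[2]) ∣ (z - 1) := by
  rcases two_dvd_or z with h' | h'
  · exact absurd h' ((isUnit_iff_not_two_dvd z).mp h)
  · exact h'

theorem stmt_1
    (D1 D2 D3 D4 D5 D6 E1 E2 E3 E4 E5 E6 F1 F2 F3 F4 F5 F6 : ℤ_[2])
    (hD4 : IsUnit D4) (hE4 : IsUnit E4) (hF6 : IsUnit F6)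
    (hD1 : (2 : ℤ_[2]) ∣ D1)
    (hD2 : (2 : ℤ_[2]) ∣ D2)
    (hD3 : (2 : ℤ_[2]) ∣ D3)
    (hD5 : (2 : ℤ_[2]) ∣ D5)
    (hD6 : (2 : ℤ_[2]) ∣ D6)
    (hE1 : (2 : ℤ_[2]) ∣ E1)
    (hE2 : (2 : ℤ_[2]) ∣ E2)
    (hE3 : (2 : ℤ_[2]) ∣ E3)
    (hE5 : (2 : ℤ_[2]) ∣ E5)
    (hE6 : (2 : ℤ_[2]) ∣ E6)
    (hF1 : (2 : ℤ_[2]) ∣ F1)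
    (hF2 : (2 : ℤ_[2]) ∣ F2)
    (hF3 : (2 : ℤ_[2]) ∣ F3)
    (hF4 : (2 : ℤ_[2]) ∣ F4)
    (hF5 : (2 : ℤ_[2]) ∣ F5)
    (x0 x1 x2 : ℤ_[2]) (hx : IsUnit x1) :
    IsUnit (quadForm D1 D2 D3 D4 D5 D6 x0 x1 x2) ∧
    IsUnit (quadForm E1 E2 E3 E4 E5 E6 x0 x1 x2 ^ 2 - 4 * quadForm D1 D2 D3 D4 D5 D6 x0 x1 x2 * quadForm F1 F2 F3 F4 F5 F6 x0 x1 x2) ∧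
    (4 : ℤ_[2]) ∣ (quadForm E1 E2 E3 E4 E5 E6 x0 x1 x2 ^ 2 - 4 * quadForm D1 D2 D3 D4 D5 D6 x0 x1 x2 * quadForm F1 F2 F3 F4 F5 F6 x0 x1 x2 - 1) := by
  set D := quadForm D1 D2 D3 D4 D5 D6 x0 x1 x2 with hD
  set E := quadForm E1 E2 E3 E4 E5 E6 x0 x1 x2 with hE
  set F := quadForm F1 F2 F3 F4 F5 F6 x0 x1 x2 with hF
  -- D is a unit: D ≡ D4 * x1^2 mod 2
  have hDunit : IsUnit D := by
    rw [isUnit_iff_not_two_dvd]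
    intro hdvd
    have h2 : (2 : ℤ_[2]) ∣ D - D4 * x1 ^ 2 := by
      rw [hD, quadForm]
      have : D1 * x0 ^ 2 + D2 * x0 * x1 + D3 * x0 * x2 + D4 * x1 ^ 2 + D5 * x1 * x2 +
          D6 * x2 ^ 2 - D4 * x1 ^ 2 =
          D1 * x0 ^ 2 + D2 * x0 * x1 + D3 * x0 * x2 + D5 * x1 * x2 + D6 * x2 ^ 2 := by ring
      rw [this]
      exact dvd_add (dvd_add (dvd_add (dvd_add (hD1.mul_right _) (Dvd.dvd.mul_right
        (hD2.mul_right _) _)) (Dvd.dvd.mul_right (hD3.mul_right _) _))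
        (Dvd.dvd.mul_right (hD5.mul_right _) _)) (hD6.mul_right _)
    have h3 : (2 : ℤ_[2]) ∣ D4 * x1 ^ 2 := by simpa using dvd_sub hdvd h2
    exact (isUnit_iff_not_two_dvd _).mp ((hD4.mul (hx.pow 2))) h3
  have hEunit : IsUnit E := by
    rw [isUnit_iff_not_two_dvd]
    intro hdvd
    have h2 : (2 : ℤ_[2]) ∣ E - E4 * x1 ^ 2 := by
      rw [hE, quadForm]
      have : E1 * x0 ^ 2 + E2 * x0 * x1 + E3 * x0 * x2 + E4 * x1 ^ 2 + E5 * x1 * x2 +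
          E6 * x2 ^ 2 - E4 * x1 ^ 2 =
          E1 * x0 ^ 2 + E2 * x0 * x1 + E3 * x0 * x2 + E5 * x1 * x2 + E6 * x2 ^ 2 := by ring
      rw [this]
      exact dvd_add (dvd_add (dvd_add (dvd_add (hE1.mul_right _) (Dvd.dvd.mul_right
        (hE2.mul_right _) _)) (Dvd.dvd.mul_right (hE3.mul_right _) _))
        (Dvd.dvd.mul_right (hE5.mul_right _) _)) (hE6.mul_right _)
    have h3 : (2 : ℤ_[2]) ∣ E4 * x1 ^ 2 := by
      have := dvd_sub hdvd h2
      simpa using this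
    exact (isUnit_iff_not_two_dvd _).mp ((hE4.mul (hx.pow 2))) h3
  -- 4 ∣ E^2 - 1
  have hE1' : (2 : ℤ_[2]) ∣ E - 1 := unit_sub_one E hEunit
  have hE2' : (2 : ℤ_[2]) ∣ E + 1 := by
    obtain ⟨c, hc⟩ := hE1'
    exact ⟨c + 1, by rw [mul_add]; rw [← hc]; ring⟩
  have h4 : (4 : ℤ_[2]) ∣ E ^ 2 - 1 := by
    obtain ⟨a, ha⟩ := hE1'
    obtain ⟨b, hb⟩ := hE2'
    exact ⟨a * b, by have : E ^ 2 - 1 = (E - 1) * (E + 1) := by ring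
                     rw [this, ha, hb]; ring⟩
  have hkey : (4 : ℤ_[2]) ∣ E ^ 2 - 4 * D * F - 1 := by
    have : E ^ 2 - 4 * D * F - 1 = (E ^ 2 - 1) - 4 * (D * F) := by ring
    rw [this]
    exact dvd_sub h4 (Dvd.intro _ rfl)
  refine ⟨hDunit, ?_, hkey⟩
  rw [isUnit_iff_not_two_dvd]
  intro hdvd
  obtain ⟨c, hc⟩ := hkey
  have h1 : E ^ 2 - 4 * D * F = 1 + 4 * c := by linear_combination hc
  rw [h1] at hdvd
  have h2 : (2 : ℤ_[2]) ∣ 4 * c := ⟨2 * c, by ring⟩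
  have hone : (2 : ℤ_[2]) ∣ 1 := by simpa using dvd_sub hdvd h2
  exact (isUnit_iff_not_two_dvd 1).mp isUnit_one hone
end

section
/- Let G₂ be the integer polynomial G₂(y₀,y₁,y₂) = 236y₀⁶ − 740y₀⁵y₁ + 1268y₀⁴y₁² − 1092y₀³y₁³ + 624y₀²y₁⁴ − 164y₀y₁⁵ + 32y₁⁶ − 616y₀⁵y₂ + 416y₀⁴y₁y₂ − 96y₀³y₁²y₂ − 976y₀²y₁³y₂ + 548y₀y₁⁴y₂ − 288y₁⁵y₂ + 1236y₀⁴y₂² − 456y₀³y₁y₂² + 1484y₀²y₁²y₂² − 356y₀y₁³y₂² + 676y₁⁴y₂² − 1332y₀³y₂³ − 804y₀²y₁y₂³ − 372y₀y₁²y₂³ − 1024y₁³y₂³ + 1036y₀²y₂⁴ + 768y₀y₁y₂⁴ + 812y₁²y₂⁴ − 472y₀y₂⁵ − 388y₁y₂⁵ + 40y₂⁶. Then there exists w in the field ℚ₂ of 2-adic numbers such that w² = G₂(−3,−1,1); consequently [−3,−1,1,w] is a ℚ₂-point of the surface w² = G₂(y₀,y₁,y₂) in P(1,1,1,3). -/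
/-- The explicit sextic `G₂` defining the K3 surface `X₂` by `w² = G₂(y₀,y₁,y₂)`. -/
def G2 {R : Type*} [CommRing R] (y0 y1 y2 : R) : R :=
  236*y0^6 - 740*y0^5*y1 + 1268*y0^4*y1^2 - 1092*y0^3*y1^3 + 624*y0^2*y1^4 - 164*y0*y1^5 + 32*y1^6 - 616*y0^5*y2 + 416*y0^4*y1*y2 - 96*y0^3*y1^2*y2 - 976*y0^2*y1^3*y2 + 548*y0*y1^4*y2 - 288*y1^5*y2 + 1236*y0^4*y2^2 - 456*y0^3*y1*y2^2 + 1484*y0^2*y1^2*y2^2 - 356*y0*y1^3*y2^2 + 676*y1^4*y2^2 - 1332*y0^3*y2^3 - 804*y0^2*y1*y2^3 - 372*y0*y1^2*y2^3 - 1024*y1^3*y2^3 + 1036*y0^2*y2^4 + 768*y0*y1*y2^4 + 812*y1^2*y2^4 - 472*y0*y2^5 - 388*y1*y2^5 + 40*y2^6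

open Polynomial

namespace PadicInt

/-- Hensel's lemma for `X² - a` at the approximate root `1`: the error `‖1 - a‖ ≤ 1/8` beats
`‖2‖² = 1/4`. -/
theorem exists_sq_eq_of_two_pow_three_dvd_sub_one {a : ℤ_[2]} (ha : (2 : ℤ_[2]) ^ 3 ∣ a - 1) :
    ∃ z : ℤ_[2], z ^ 2 = a := by
  set F : ℤ_[2][X] := X ^ 2 - C a
  have hF : aeval (1 : ℤ_[2]) F = -(a - 1) := by simp [F]
  have hF' : aeval (1 : ℤ_[2]) (derivative F) = 2 := by simp [F]; norm_num
  have hnorm : ‖aeval (1 : ℤ_[2]) F‖ < ‖aeval (1 : ℤ_[2]) (derivative F)‖ ^ 2 :=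
    calc ‖aeval (1 : ℤ_[2]) F‖ ≤ (2 : ℝ) ^ (-3 : ℤ) := by
          rw [hF, norm_neg]
          exact (norm_le_pow_iff_mem_span_pow _ 3).2 (Ideal.mem_span_singleton.2 (mod_cast ha))
      _ < (2⁻¹) ^ 2 := by norm_num
      _ = ‖aeval (1 : ℤ_[2]) (derivative F)‖ ^ 2 := by
          rw [hF', show ‖(2 : ℤ_[2])‖ = 2⁻¹ by simpa using norm_p (p := 2)]
  obtain ⟨z, hz, -⟩ := hensels_lemma hnorm
  exact ⟨z, by simpa [F, sub_eq_zero] using hz⟩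

end PadicInt

theorem stmt_8 : ∃ w : ℚ_[2], w ^ 2 = G2 (-3 : ℚ_[2]) (-1) 1 := by
  obtain ⟨z, hz⟩ :=
    PadicInt.exists_sq_eq_of_two_pow_three_dvd_sub_one (a := 22313) ⟨2789, by norm_num⟩
  have hG : G2 (-3 : ℚ_[2]) (-1) 1 = 4 ^ 2 * 22313 := by norm_num [G2]
  refine ⟨4 * z, ?_⟩
  rw [hG, mul_pow, ← PadicInt.coe_pow, hz]
  exact congrArg _ (PadicInt.coe_natCast 22313)
end
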